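/- Suppose v_max < 1+2v_min and α* < α ≤ α_s, where α* := (v_max − v_min)/(|v_min|(1+v_max)²) and α_s := 1/(4|v_min|(1+v_min)). Then X(v*,k) > 0 for all k ≥ 0. -/

import Mathlib

/-- Account value `X(v,k)` for feedback gain `α`, initial value `X0`, path `v`. -/
noncomputable def accountX (α X0 : ℝ) (v : ℕ → ℝ) : ℕ → ℝ
  | 0 => X0
  | 1 => X0
  | (k + 2) => accountX α X0 v (k + 1) + α * (1 + v k) * v (k + 1) * accountX α X0 v k

/-- The distinguished path: `v*(0) = v_max` and `v*(k) = v_min` for `k ≥ 1`. -/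
noncomputable def vstar (vmin vmax : ℝ) : ℕ → ℝ := fun k => if k = 0 then vmax else vmin

/-!
After the first step the path `v*` is constant, so `x n := X(v*, n+1)` solves
`x (n+2) = x (n+1) - β x n` with `β = α |v_min| (1 + v_min) ≤ 1/4` (this is `α ≤ α_s`).
For such a recurrence the invariant `0 < x n < 2 x (n+1)` propagates, and the gap condition
`v_max < 1 + 2 v_min` is exactly what makes the first step `X(v*,2) = X_0 (1 - α |v_min| (1 + v_max))`
exceed `X_0 / 2`.
-/

theorem pos_of_succ_succ_eq_sub_mul {x : ℕ → ℝ} {β : ℝ} (hβ : β ≤ 1 / 4)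
    (hrec : ∀ n, x (n + 2) = x (n + 1) - β * x n) (h0 : 0 < x 0) (h01 : x 0 < 2 * x 1) :
    ∀ n, 0 < x n := by
  have step : ∀ n, 0 < x n ∧ x n < 2 * x (n + 1) := by
    intro n
    induction n with
    | zero => exact ⟨h0, h01⟩
    | succ n ih =>
      obtain ⟨hpos, hlt⟩ := ih
      have hquarter : β * x n ≤ x n / 4 := by nlinarith
      refine ⟨by linarith, ?_⟩
      rw [hrec n]
      linarith
  exact fun n => (step n).1

section DistinguishedPath

variable (α X0 vmin vmax : ℝ)

theorem vstar_zero : vstar vmin vmax 0 = vmax := rfl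

theorem vstar_add_one (n : ℕ) : vstar vmin vmax (n + 1) = vmin := if_neg n.succ_ne_zero

theorem accountX_vstar_two :
    accountX α X0 (vstar vmin vmax) 2 = X0 * (1 + α * (1 + vmax) * vmin) := by
  simp only [accountX, vstar_zero, vstar_add_one]
  ring

theorem accountX_vstar_add_three (n : ℕ) :
    accountX α X0 (vstar vmin vmax) (n + 3) =
      accountX α X0 (vstar vmin vmax) (n + 2) +
        α * (1 + vmin) * vmin * accountX α X0 (vstar vmin vmax) (n + 1) := by
  simp only [accountX, vstar_add_one]

end DistinguishedPath

theorem distinguished_path_positive_case_c_general (vmin vmax α X0 : ℝ)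
    (h1 : -1 < vmin) (h2 : vmin < 0) (h3 : 0 < vmax) (hX0 : 0 < X0)
    (hgap : vmax < 1 + 2 * vmin)
    (hαhi : α ≤ 1 / (4 * |vmin| * (1 + vmin))) :
    ∀ k, 0 < accountX α X0 (vstar vmin vmax) k := by
  rw [abs_of_neg h2, le_div_iff₀ (by nlinarith)] at hαhi
  set β := α * -vmin * (1 + vmin)
  have hβ : β ≤ 1 / 4 := by linarith
  have hfirst : X0 < 2 * accountX α X0 (vstar vmin vmax) 2 := by
    have hβ_scaled : β * (1 + vmax) ≤ (1 + vmax) / 4 := by nlinarith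
    rw [accountX_vstar_two]
    nlinarith
  have hpos := pos_of_succ_succ_eq_sub_mul (x := fun n => accountX α X0 (vstar vmin vmax) (n + 1))
    hβ (fun n => by simp only [accountX_vstar_add_three]; ring) hX0 hfirst
  rintro (_ | k)
  · exact hX0
  · exact hpos k

/-- Lemma 2(c): if `v_max < 1 + 2 v_min` and `α* < α ≤ α_s`, then `X(v*,k)` is
positive for all `k ≥ 0`. -/
theorem distinguished_path_positive_case_c (vmin vmax α X0 : ℝ)
    (h1 : -1 < vmin) (h2 : vmin < 0) (h3 : 0 < vmax) (hX0 : 0 < X0)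
    (hgap : vmax < 1 + 2 * vmin)
    (hαlo : (vmax - vmin) / (|vmin| * (1 + vmax) ^ 2) < α)
    (hαhi : α ≤ 1 / (4 * |vmin| * (1 + vmin))) :
    ∀ k, 0 < accountX α X0 (vstar vmin vmax) k :=
  distinguished_path_positive_case_c_general vmin vmax α X0 h1 h2 h3 hX0 hgap hαhi
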